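/- arXiv:2111.06051 — 6 statements merged into one kernel-verified Lean document; each statement's English description precedes it below -/
import Mathlib

section
/- For each θ ∈ (0, π/2), the function f(λ) = cos(θ)·tanh(λ·cos(θ)) − sin(θ)·cot(λ·sin(θ)) has exactly one zero λ(θ) in the interval (0, π/(2·sin(θ))). -/
/-!
Write `c = cos θ`, `s = sin θ`. Since `tanh` is increasing and `cot` is decreasing on `(0, π)`,
`f λ = c tanh (λ c) - s cot (λ s)` is strictly increasing on `(0, π / s)`, so it has at most one
zero there. At `λ = π / (2 s)` the cotangent vanishes, so `f > 0`. Near `0`, the bound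
`cot x > 1 / (2 x)` for `0 < x ≤ π / 3` gives `s cot (λ s) > 1 / (2 λ) ≥ 1 > c tanh (λ c)`
once `λ ≤ 1 / 2`, so `f < 0`; the intermediate value theorem provides the zero.
-/

open Real Set

namespace Real

theorem tanh_strictMono : StrictMono tanh := fun x y hxy => by
  by_contra! h
  have := artanh_le_artanh (neg_one_lt_tanh y) (tanh_lt_one x) h
  rw [artanh_tanh, artanh_tanh] at this
  linarith

theorem tanh_pos {x : ℝ} (hx : 0 < x) : 0 < tanh x :=
  tanh_zero ▸ tanh_strictMono hx

theorem tanh_nonneg {x : ℝ} (hx : 0 ≤ x) : 0 ≤ tanh x :=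
  tanh_zero ▸ tanh_strictMono.monotone hx

@[fun_prop]
theorem continuous_tanh : Continuous tanh := by
  simp only [funext tanh_eq_sinh_div_cosh]
  exact continuous_sinh.div continuous_cosh fun x => (cosh_pos x).ne'

theorem strictAntiOn_cos_div_sin : StrictAntiOn (fun x => cos x / sin x) (Ioo 0 π) := by
  intro x hx y hy hxy
  rw [div_lt_div_iff₀ (sin_pos_of_mem_Ioo hy) (sin_pos_of_mem_Ioo hx)]
  have h : 0 < sin (y - x) := sin_pos_of_pos_of_lt_pi (by linarith) (by linarith [hx.1, hy.2])
  rw [sin_sub] at h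
  linarith

theorem one_div_two_mul_lt_cos_div_sin {x : ℝ} (hx0 : 0 < x) (hx : x ≤ π / 3) :
    1 / (2 * x) < cos x / sin x := by
  have hsin : 0 < sin x := sin_pos_of_pos_of_lt_pi hx0 (by linarith [pi_pos])
  have hcos : 1 / 2 ≤ cos x :=
    cos_pi_div_three ▸ cos_le_cos_of_nonneg_of_le_pi hx0.le (by linarith [pi_pos]) hx
  rw [div_lt_div_iff₀ (by positivity) hsin]
  nlinarith [sin_lt hx0]

end Real

theorem mul_mem_Ioo_zero_of_mem_Ioo_div {a b s : ℝ} (hs : 0 < s) (ha : a ∈ Ioo 0 (b / s)) :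
    a * s ∈ Ioo 0 b :=
  ⟨mul_pos ha.1 hs, (lt_div_iff₀ hs).1 ha.2⟩

noncomputable def tanhCotDiff (c s l : ℝ) : ℝ :=
  c * tanh (l * c) - s * (cos (l * s) / sin (l * s))

section tanhCotDiff

variable {c s : ℝ}

theorem tanhCotDiff_strictMonoOn (hc : 0 ≤ c) (hs : 0 < s) :
    StrictMonoOn (tanhCotDiff c s) (Ioo 0 (π / s)) := by
  intro x hx y hy hxy
  have htanh : tanh (x * c) ≤ tanh (y * c) :=
    tanh_strictMono.monotone (mul_le_mul_of_nonneg_right hxy.le hc)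
  have hcot := strictAntiOn_cos_div_sin (mul_mem_Ioo_zero_of_mem_Ioo_div hs hx)
    (mul_mem_Ioo_zero_of_mem_Ioo_div hs hy) (mul_lt_mul_of_pos_right hxy hs)
  unfold tanhCotDiff
  linarith [mul_le_mul_of_nonneg_left htanh hc, mul_lt_mul_of_pos_left hcot hs]

theorem tanhCotDiff_continuousOn (hs : 0 < s) :
    ContinuousOn (tanhCotDiff c s) (Ioo 0 (π / s)) := by
  have hsin : ∀ l ∈ Ioo 0 (π / s), sin (l * s) ≠ 0 := fun l hl =>
    (sin_pos_of_mem_Ioo (mul_mem_Ioo_zero_of_mem_Ioo_div hs hl)).ne'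
  exact (by fun_prop : Continuous fun l => c * tanh (l * c)).continuousOn.sub <| continuousOn_const.mul <|
    (by fun_prop : Continuous fun l => cos (l * s)).continuousOn.div (by fun_prop) hsin

theorem exists_tanhCotDiff_neg (hc0 : 0 ≤ c) (hc1 : c ≤ 1) (hs : 0 < s) {b : ℝ} (hb : 0 < b) :
    ∃ a ∈ Ioo 0 b, tanhCotDiff c s a < 0 := by
  set a := min (1 / 2) (min (b / 2) (π / (3 * s)))
  have ha0 : 0 < a := lt_min (by norm_num) (lt_min (by linarith) (by positivity))
  have ha_half : a ≤ 1 / 2 := min_le_left _ _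
  have has : a * s ≤ π / 3 := by
    calc a * s ≤ π / (3 * s) * s :=
          mul_le_mul_of_nonneg_right ((min_le_right _ _).trans (min_le_right _ _)) hs.le
      _ = π / 3 := by field_simp
  refine ⟨a, ⟨ha0, (min_le_right _ _).trans_lt ((min_le_left _ _).trans_lt (by linarith))⟩, ?_⟩
  have hcot : s * (1 / (2 * (a * s))) < s * (cos (a * s) / sin (a * s)) :=
    mul_lt_mul_of_pos_left (one_div_two_mul_lt_cos_div_sin (mul_pos ha0 hs) has) hs
  have hone : 1 ≤ s * (1 / (2 * (a * s))) := by
    rw [show s * (1 / (2 * (a * s))) = 1 / (2 * a) by field_simp, le_div_iff₀ (by positivity)]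
    linarith
  have htanh : c * tanh (a * c) < 1 := by
    nlinarith [tanh_lt_one (a * c), tanh_nonneg (mul_nonneg ha0.le hc0)]
  unfold tanhCotDiff
  linarith

theorem tanhCotDiff_pi_div_two_mul_pos (hc : 0 < c) (hs : 0 < s) :
    0 < tanhCotDiff c s (π / (2 * s)) := by
  have h : π / (2 * s) * s = π / 2 := by field_simp
  simp only [tanhCotDiff, h, cos_pi_div_two, zero_div, mul_zero, sub_zero]
  exact mul_pos hc (tanh_pos (mul_pos (by positivity) hc))

end tanhCotDiff

theorem unique_zero_of_f {θ : ℝ} (h0 : 0 < θ) (h1 : θ < Real.pi / 2) :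
    ∃! l : ℝ, l ∈ Set.Ioo 0 (Real.pi / (2 * Real.sin θ)) ∧
      Real.cos θ * Real.tanh (l * Real.cos θ)
        - Real.sin θ * (Real.cos (l * Real.sin θ) / Real.sin (l * Real.sin θ)) = 0 := by
  have hs : 0 < sin θ := sin_pos_of_pos_of_lt_pi h0 (by linarith [pi_pos])
  have hc : 0 < cos θ := cos_pos_of_mem_Ioo ⟨by linarith, h1⟩
  set B := π / (2 * sin θ)
  have hB_lt : B < π / sin θ := div_lt_div_of_pos_left pi_pos hs (by linarith)
  have hdom : Ioo 0 B ⊆ Ioo 0 (π / sin θ) := Ioo_subset_Ioo_right hB_lt.le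
  show ∃! l, l ∈ Ioo 0 B ∧ tanhCotDiff (cos θ) (sin θ) l = 0
  obtain ⟨a, ha, hfa⟩ := exists_tanhCotDiff_neg hc.le (cos_le_one θ) hs (by positivity : 0 < B)
  have hIcc : Icc a B ⊆ Ioo 0 (π / sin θ) := fun x hx => ⟨ha.1.trans_le hx.1, hx.2.trans_lt hB_lt⟩
  obtain ⟨l, hl, hfl⟩ := intermediate_value_Ioo ha.2.le
    ((tanhCotDiff_continuousOn hs).mono hIcc) ⟨hfa, tanhCotDiff_pi_div_two_mul_pos hc hs⟩
  have hlB : l ∈ Ioo 0 B := ⟨ha.1.trans hl.1, hl.2⟩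
  refine ⟨l, ⟨hlB, hfl⟩, fun y ⟨hy, hfy⟩ => ?_⟩
  exact (tanhCotDiff_strictMonoOn hc.le hs).injOn (hdom hy) (hdom hlB) (hfy.trans hfl.symm)
end

section
/- Let θ ∈ (0, π/2) and let λ ∈ (0, π/(2·sin θ)) satisfy cos(θ)·tanh(λ·cos(θ)) = sin(θ)·cot(λ·sin(θ)). Then the partial derivative in θ of f(λ,θ) = cos(θ)·tanh(λ·cos(θ)) − sin(θ)·cot(λ·sin(θ)) at this point equals −sec(θ)·cot(λ·sin(θ))·(1 − λ·sin(θ)·cot(λ·sin(θ))), and this quantity is strictly negative. -/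
/-!
Write `T = tanh (l cos t)` and `C = cot (l sin t)`. Differentiating gives
`∂f/∂t = -sin t · T - cos t · C + l sin t cos t (T² + C²)`. At a zero of `f`, `T = tan θ · C`,
and then `sin² + cos² = 1` collapses the derivative to `-sec θ · C (1 - l sin θ · C)`.
With `Y = l sin θ ∈ (0, π/2)` we have `C > 0` and `Y · C < 1` (as `Y < tan Y`), so it is negative.
-/

open Real

theorem Real.hasDerivAt_tanh (x : ℝ) : HasDerivAt tanh (1 - tanh x ^ 2) x := by
  have h := (hasDerivAt_sinh x).div (hasDerivAt_cosh x) (cosh_pos x).ne'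
  rw [show sinh / cosh = tanh from funext fun y => (tanh_eq_sinh_div_cosh y).symm] at h
  refine h.congr_deriv ?_
  rw [tanh_eq_sinh_div_cosh]
  have := cosh_sq_sub_sinh_sq x
  have := (cosh_pos x).ne'
  field_simp

theorem hasDerivAt_cos_div_sin {x : ℝ} (hx : sin x ≠ 0) :
    HasDerivAt (fun y => cos y / sin y) (-(1 + (cos x / sin x) ^ 2)) x := by
  refine ((hasDerivAt_cos x).div (hasDerivAt_sin x) hx).congr_deriv ?_
  field_simp
  ring

theorem mul_cos_div_sin_lt_one {y : ℝ} (h0 : 0 < y) (h1 : y < π / 2) :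
    y * (cos y / sin y) < 1 := by
  have hsin : 0 < sin y := sin_pos_of_pos_of_lt_pi h0 (by linarith [pi_pos])
  have hcos : 0 < cos y := cos_pos_of_mem_Ioo ⟨by linarith [pi_pos], h1⟩
  have hy : y < sin y / cos y := tan_eq_sin_div_cos y ▸ lt_tan h0 h1
  rw [mul_div_assoc', div_lt_one hsin]
  exact (lt_div_iff₀ hcos).mp hy

theorem hasDerivAt_cos_mul_tanh_sub_sin_mul_cot {l t : ℝ} (ht : sin (l * sin t) ≠ 0) :
    HasDerivAt (fun t => cos t * tanh (l * cos t) - sin t * (cos (l * sin t) / sin (l * sin t)))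
      (-sin t * tanh (l * cos t) - cos t * (cos (l * sin t) / sin (l * sin t))
        + l * sin t * cos t * (tanh (l * cos t) ^ 2 + (cos (l * sin t) / sin (l * sin t)) ^ 2))
      t := by
  have hT := (hasDerivAt_tanh (l * cos t)).comp t ((hasDerivAt_cos t).const_mul l)
  have hC := (hasDerivAt_cos_div_sin ht).comp t ((hasDerivAt_sin t).const_mul l)
  refine (((hasDerivAt_cos t).mul hT).sub ((hasDerivAt_sin t).mul hC)).congr_deriv ?_
  simp only [Function.comp_apply]
  ring

theorem neg_mul_sub_mul_add_eq_of_mul_eq {s c T C l : ℝ} (hsc : s ^ 2 + c ^ 2 = 1)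
    (hc : c ≠ 0) (hzero : c * T = s * C) :
    -s * T - c * C + l * s * c * (T ^ 2 + C ^ 2) = -(1 / c) * C * (1 - l * s * C) := by
  have hT : T = s * C / c := by field_simp; linarith
  subst hT
  field_simp
  linear_combination (-C + l * s * C ^ 2) * hsc

theorem deriv_f_theta_neg {θ l : ℝ} (h0 : 0 < θ) (h1 : θ < Real.pi / 2)
    (hl : l ∈ Set.Ioo 0 (Real.pi / (2 * Real.sin θ)))
    (hzero : Real.cos θ * Real.tanh (l * Real.cos θ)
      = Real.sin θ * (Real.cos (l * Real.sin θ) / Real.sin (l * Real.sin θ))) :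
    deriv (fun t : ℝ => Real.cos t * Real.tanh (l * Real.cos t)
        - Real.sin t * (Real.cos (l * Real.sin t) / Real.sin (l * Real.sin t))) θ
      = -(1 / Real.cos θ) * (Real.cos (l * Real.sin θ) / Real.sin (l * Real.sin θ))
          * (1 - l * Real.sin θ * (Real.cos (l * Real.sin θ) / Real.sin (l * Real.sin θ)))
    ∧ -(1 / Real.cos θ) * (Real.cos (l * Real.sin θ) / Real.sin (l * Real.sin θ))
          * (1 - l * Real.sin θ * (Real.cos (l * Real.sin θ) / Real.sin (l * Real.sin θ))) < 0 := by
  obtain ⟨hl0, hl1⟩ := hl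
  have hs : 0 < sin θ := sin_pos_of_pos_of_lt_pi h0 (by linarith [pi_pos])
  have hc : 0 < cos θ := cos_pos_of_mem_Ioo ⟨by linarith, h1⟩
  have hY0 : 0 < l * sin θ := mul_pos hl0 hs
  have hY1 : l * sin θ < π / 2 := by
    rw [lt_div_iff₀ (by positivity)] at hl1
    linarith
  have hsY : 0 < sin (l * sin θ) := sin_pos_of_pos_of_lt_pi hY0 (by linarith [pi_pos])
  have hcY : 0 < cos (l * sin θ) := cos_pos_of_mem_Ioo ⟨by linarith [pi_pos], hY1⟩
  refine ⟨?_, ?_⟩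
  · rw [(hasDerivAt_cos_mul_tanh_sub_sin_mul_cot hsY.ne').deriv]
    exact neg_mul_sub_mul_add_eq_of_mul_eq (sin_sq_add_cos_sq θ) hc.ne' hzero
  · have hlt := mul_cos_div_sin_lt_one hY0 hY1
    have hpos : 0 < 1 / cos θ * (cos (l * sin θ) / sin (l * sin θ)) := by positivity
    nlinarith
end

section
/- For each t < 0 and λ > 0, the set A = {(x,y) ∈ ℝ × (0, π/(2λ)) : sin(λy) = e^{λ²t}·cosh(λx)} (the shifted scaled Angenent oval), viewed as the graph of y(x,t) = (1/λ)·arcsin(e^{λ²t}·cosh(λx)) over the interval where e^{λ²t}·cosh(λx) < 1, satisfies the curve shortening flow equation y_t = y_xx/(1 + y_x²). -/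
/-!
With `u = e^{λ²t} cosh(λx)` and `S = √(1 - u²) = cos(λy)`, the chain rule gives
`y_t = λu / S`, `y_x = e^{λ²t} sinh(λx) / S` and `y_xx = λu (1 - e^{2λ²t}) / S³`.
Since `cosh² - sinh² = 1`, `S² + (e^{λ²t} sinh(λx))² = 1 - e^{2λ²t}`, so that
`1 + y_x² = (1 - e^{2λ²t}) / S²` and the quotient `y_xx / (1 + y_x²)` is `λu / S = y_t`.
-/

open Real Filter Topology

theorem HasDerivAt.arcsin {f : ℝ → ℝ} {f' a : ℝ} (hf : HasDerivAt f f' a) (h : f a ^ 2 < 1) :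
    HasDerivAt (fun s => arcsin (f s)) (f' / √(1 - f a ^ 2)) a := by
  have h₁ : f a ≠ -1 := by rintro h'; norm_num [h'] at h
  have h₂ : f a ≠ 1 := by rintro h'; norm_num [h'] at h
  rw [div_eq_inv_mul, ← one_div]
  exact (hasDerivAt_arcsin h₁ h₂).comp a hf

section AngenentOval

variable {l c : ℝ}

theorem hasDerivAt_arcsin_exp_mul_cosh (hl : l ≠ 0) {x t : ℝ}
    (h : (exp (l ^ 2 * t) * cosh (l * x)) ^ 2 < 1) :
    HasDerivAt (fun s => 1 / l * arcsin (exp (l ^ 2 * s) * cosh (l * x)))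
      (l * (exp (l ^ 2 * t) * cosh (l * x)) / √(1 - (exp (l ^ 2 * t) * cosh (l * x)) ^ 2)) t := by
  have hu : HasDerivAt (fun s => exp (l ^ 2 * s) * cosh (l * x))
      (l ^ 2 * (exp (l ^ 2 * t) * cosh (l * x))) t :=
    (((hasDerivAt_id' t).const_mul (l ^ 2)).exp.mul_const _).congr_deriv (by ring)
  exact ((hu.arcsin h).const_mul (1 / l)).congr_deriv (by field_simp)

theorem hasDerivAt_arcsin_mul_cosh (hl : l ≠ 0) {z : ℝ} (h : (c * cosh (l * z)) ^ 2 < 1) :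
    HasDerivAt (fun z => 1 / l * arcsin (c * cosh (l * z)))
      (c * sinh (l * z) / √(1 - (c * cosh (l * z)) ^ 2)) z := by
  have hu : HasDerivAt (fun z => c * cosh (l * z)) (l * (c * sinh (l * z))) z :=
    (((hasDerivAt_id' z).const_mul l).cosh.const_mul c).congr_deriv (by ring)
  exact ((hu.arcsin h).const_mul (1 / l)).congr_deriv (by field_simp)

theorem sq_sqrt_one_sub_sq_mul_cosh_add_sq_mul_sinh {y : ℝ} (h : (c * cosh y) ^ 2 ≤ 1) :
    √(1 - (c * cosh y) ^ 2) ^ 2 + (c * sinh y) ^ 2 = 1 - c ^ 2 := by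
  rw [sq_sqrt (by linarith)]
  linear_combination (-c ^ 2) * cosh_sq y

theorem hasDerivAt_mul_sinh_div_sqrt {x : ℝ} (h : (c * cosh (l * x)) ^ 2 < 1) :
    HasDerivAt (fun z => c * sinh (l * z) / √(1 - (c * cosh (l * z)) ^ 2))
      (l * (c * cosh (l * x)) * (1 - c ^ 2) / √(1 - (c * cosh (l * x)) ^ 2) ^ 3) x := by
  have hS : 0 < 1 - (c * cosh (l * x)) ^ 2 := by linarith
  have hlin := (hasDerivAt_id' x).const_mul l
  have hden := (((hlin.cosh.const_mul c).fun_pow 2).const_sub 1).sqrt hS.ne'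
  refine ((hlin.sinh.const_mul c).div hden (sqrt_pos.mpr hS).ne').congr_deriv ?_
  rw [← sq_sqrt_one_sub_sq_mul_cosh_add_sq_mul_sinh h.le]
  have hS_ne : √(1 - (c * cosh (l * x)) ^ 2) ≠ 0 := (sqrt_pos.mpr hS).ne'
  field_simp
  ring

theorem deriv_deriv_arcsin_mul_cosh (hl : l ≠ 0) {x : ℝ} (h : (c * cosh (l * x)) ^ 2 < 1) :
    deriv (deriv fun z => 1 / l * arcsin (c * cosh (l * z))) x
      = l * (c * cosh (l * x)) * (1 - c ^ 2) / √(1 - (c * cosh (l * x)) ^ 2) ^ 3 := by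
  have hnear : ∀ᶠ z in 𝓝 x, (c * cosh (l * z)) ^ 2 < 1 :=
    (isOpen_lt (by fun_prop) continuous_const).mem_nhds h
  have hderiv : deriv (fun z => 1 / l * arcsin (c * cosh (l * z))) =ᶠ[𝓝 x]
      fun z => c * sinh (l * z) / √(1 - (c * cosh (l * z)) ^ 2) :=
    hnear.mono fun z hz => (hasDerivAt_arcsin_mul_cosh hl hz).deriv
  rw [hderiv.deriv_eq]
  exact (hasDerivAt_mul_sinh_div_sqrt h).deriv

end AngenentOval

theorem angenent_oval_satisfies_csf_general {l : ℝ} (hl : 0 < l) {x t : ℝ}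
    (hdom : Real.exp (l ^ 2 * t) * Real.cosh (l * x) < 1) :
    deriv (fun s : ℝ => (1 / l) * Real.arcsin (Real.exp (l ^ 2 * s) * Real.cosh (l * x))) t
      = deriv (deriv (fun z : ℝ => (1 / l) * Real.arcsin (Real.exp (l ^ 2 * t) * Real.cosh (l * z)))) x
        / (1 + (deriv (fun z : ℝ => (1 / l) * Real.arcsin (Real.exp (l ^ 2 * t) * Real.cosh (l * z))) x) ^ 2) := by
  have h : (exp (l ^ 2 * t) * cosh (l * x)) ^ 2 < 1 := by
    have : 0 < exp (l ^ 2 * t) * cosh (l * x) := by positivity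
    nlinarith
  rw [(hasDerivAt_arcsin_exp_mul_cosh hl.ne' h).deriv, deriv_deriv_arcsin_mul_cosh hl.ne' h,
    (hasDerivAt_arcsin_mul_cosh hl.ne' h).deriv, ← sq_sqrt_one_sub_sq_mul_cosh_add_sq_mul_sinh h.le]
  have hS : 0 < √(1 - (exp (l ^ 2 * t) * cosh (l * x)) ^ 2) := sqrt_pos.mpr (by linarith)
  generalize √(1 - (exp (l ^ 2 * t) * cosh (l * x)) ^ 2) = S at hS ⊢
  field_simp

/-- The shifted scaled Angenent oval, viewed as the graph
`y(x,t) = (1/λ) arcsin(e^{λ²t} cosh(λx))`, satisfies graphical curve shortening flow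
`y_t = y_xx / (1 + y_x²)` wherever `e^{λ²t} cosh(λx) < 1`. -/
theorem angenent_oval_satisfies_csf {l : ℝ} (hl : 0 < l) {x t : ℝ} (ht : t < 0)
    (hdom : Real.exp (l ^ 2 * t) * Real.cosh (l * x) < 1) :
    deriv (fun s : ℝ => (1 / l) * Real.arcsin (Real.exp (l ^ 2 * s) * Real.cosh (l * x))) t
      = deriv (deriv (fun z : ℝ => (1 / l) * Real.arcsin (Real.exp (l ^ 2 * t) * Real.cosh (l * z)))) x
        / (1 + (deriv (fun z : ℝ => (1 / l) * Real.arcsin (Real.exp (l ^ 2 * t) * Real.cosh (l * z))) x) ^ 2) :=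
  angenent_oval_satisfies_csf_general hl hdom
end

section
/- Define θ⁻(t) = arcsin(e^t) for t < 0. The family of circular arcs C_{θ⁻(t)} = {(x,y) : x² + (csc θ⁻(t) − y)² = cot² θ⁻(t)} ∩ B² is a subsolution barrier for curve shortening flow: the inward normal speed of C_{θ⁻(t)} is no greater than its curvature. Concretely, writing the normal speed at a point with height y as y·θ'(t)/sin θ and the curvature as tan θ, one has y·(θ⁻)'(t)/sin θ⁻(t) − tan θ⁻(t) ≤ 0 for all points of the arc with (1−cos θ⁻)/sin θ⁻ ≤ y ≤ sin θ⁻. -/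
/-! `θ⁻ = arcsin ∘ exp` solves `θ' = tan θ`, so the normal speed minus the curvature is
`(y / sin θ⁻ - 1) · tan θ⁻`, which is `≤ 0` because `y ≤ sin θ⁻` and `tan θ⁻ ≥ 0`. -/

open Real

theorem hasDerivAt_arcsin_exp {t : ℝ} (ht : t < 0) :
    HasDerivAt (fun s : ℝ => arcsin (exp s)) (tan (arcsin (exp t))) t := by
  have hlt : exp t < 1 := exp_lt_one_iff.mpr ht
  have hd := (hasDerivAt_arcsin (by linarith [exp_pos t]) hlt.ne).comp t (hasDerivAt_exp t)
  rw [tan_arcsin, ← one_div_mul_eq_div]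
  exact hd

theorem mul_tan_div_sin_sub_tan_nonpos {θ y : ℝ} (hsin : 0 < sin θ) (htan : 0 ≤ tan θ)
    (hy : y ≤ sin θ) : y * tan θ / sin θ - tan θ ≤ 0 := by
  have hfactor : y * tan θ / sin θ - tan θ = (y / sin θ - 1) * tan θ := by
    field_simp
  rw [hfactor]
  exact mul_nonpos_of_nonpos_of_nonneg (by rwa [sub_nonpos, div_le_one hsin]) htan

theorem lower_circle_barrier_general {t y : ℝ} (ht : t < 0)
    (hy2 : y ≤ Real.sin (Real.arcsin (Real.exp t))) :
    y * deriv (fun s : ℝ => Real.arcsin (Real.exp s)) t / Real.sin (Real.arcsin (Real.exp t))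
      - Real.tan (Real.arcsin (Real.exp t)) ≤ 0 := by
  have hsin : sin (arcsin (exp t)) = exp t :=
    sin_arcsin (by linarith [exp_pos t]) (exp_lt_one_iff.mpr ht).le
  have htan : 0 ≤ tan (arcsin (exp t)) := by
    rw [tan_arcsin]
    positivity
  rw [(hasDerivAt_arcsin_exp ht).deriv]
  exact mul_tan_div_sin_sub_tan_nonpos (by rw [hsin]; exact exp_pos t) htan hy2

/-- The circles `C_{θ⁻(t)}` with `θ⁻(t) = arcsin(e^t)` form a subsolution barrier:
at any point of height `y` on the arc, the inward normal speed `y·(θ⁻)'(t)/sin θ⁻`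
is at most the curvature `tan θ⁻`. -/
theorem lower_circle_barrier {t y : ℝ} (ht : t < 0)
    (hy1 : (1 - Real.cos (Real.arcsin (Real.exp t))) / Real.sin (Real.arcsin (Real.exp t)) ≤ y)
    (hy2 : y ≤ Real.sin (Real.arcsin (Real.exp t))) :
    y * deriv (fun s : ℝ => Real.arcsin (Real.exp s)) t / Real.sin (Real.arcsin (Real.exp t))
      - Real.tan (Real.arcsin (Real.exp t)) ≤ 0 :=
  lower_circle_barrier_general ht hy2
end

section
/- Define θ⁺(t) = arcsin(e^{2t}) for t < 0. Then for every point of the arc C_{θ⁺(t)} ∩ B² with height y satisfying (1 − cos θ⁺)/sin θ⁺ ≤ y ≤ sin θ⁺, one has y·(θ⁺)'(t)/sin θ⁺(t) − tan θ⁺(t) ≥ 0; that is, the inward normal speed of C_{θ⁺(t)} is at least its curvature. -/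
/-!
Since `θ⁺ = arcsin (e^{2t})` satisfies `(θ⁺)' = 2 tan θ⁺`, the quantity to bound is
`(2y / sin θ⁺ - 1) · tan θ⁺`. The lower bound on `y` gives `1 - cos θ ≤ y sin θ`, and
`sin² θ = (1 - cos θ)(1 + cos θ) ≤ 2 (1 - cos θ)` then yields `sin θ ≤ 2y`.
-/

open Real

lemma hasDerivAt_arcsin_exp_two_mul {t : ℝ} (ht : t < 0) :
    HasDerivAt (fun s : ℝ => arcsin (exp (2 * s))) (2 * tan (arcsin (exp (2 * t)))) t := by
  have hexp : HasDerivAt (fun s : ℝ => exp (2 * s)) (exp (2 * t) * (2 * 1)) t :=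
    ((hasDerivAt_id t).const_mul 2).exp
  have hlt : exp (2 * t) < 1 := exp_lt_one_iff.mpr (by linarith)
  have hgt : -1 < exp (2 * t) := by linarith [exp_pos (2 * t)]
  refine ((hasDerivAt_arcsin hgt.ne' hlt.ne).comp t hexp).congr_deriv ?_
  rw [tan_arcsin]
  ring

lemma sin_le_two_mul_of_one_sub_cos_div_sin_le {θ y : ℝ} (hsin : 0 < sin θ)
    (h : (1 - cos θ) / sin θ ≤ y) : sin θ ≤ 2 * y := by
  have hcos : 1 - cos θ ≤ y * sin θ := (div_le_iff₀ hsin).mp h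
  have hsq : sin θ * sin θ ≤ 2 * y * sin θ := by
    nlinarith [sin_sq_add_cos_sq θ, cos_le_one θ]
  exact le_of_mul_le_mul_right hsq hsin

lemma mul_two_tan_div_sin_sub_tan_nonneg {θ y : ℝ} (hθ : 0 < θ) (hθπ : θ < π / 2)
    (hy : sin θ ≤ 2 * y) : 0 ≤ y * (2 * tan θ) / sin θ - tan θ := by
  have hsin : 0 < sin θ := sin_pos_of_pos_of_lt_pi hθ (by linarith [pi_pos])
  have htan : 0 < tan θ := tan_pos_of_pos_of_lt_pi_div_two hθ hθπ
  have hfactor : y * (2 * tan θ) / sin θ - tan θ = (2 * y - sin θ) / sin θ * tan θ := by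
    field_simp
  rw [hfactor]
  exact mul_nonneg (div_nonneg (by linarith) hsin.le) htan.le

theorem upper_circle_barrier_general {t y : ℝ} (ht : t < 0)
    (hy1 : (1 - Real.cos (Real.arcsin (Real.exp (2 * t)))) / Real.sin (Real.arcsin (Real.exp (2 * t))) ≤ y) :
    y * deriv (fun s : ℝ => Real.arcsin (Real.exp (2 * s))) t
        / Real.sin (Real.arcsin (Real.exp (2 * t)))
      - Real.tan (Real.arcsin (Real.exp (2 * t))) ≥ 0 := by
  rw [(hasDerivAt_arcsin_exp_two_mul ht).deriv, ge_iff_le]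
  have hθ : 0 < arcsin (exp (2 * t)) := arcsin_pos.mpr (exp_pos _)
  have hθπ : arcsin (exp (2 * t)) < π / 2 :=
    arcsin_lt_pi_div_two.mpr (exp_lt_one_iff.mpr (by linarith))
  have hsin : 0 < sin (arcsin (exp (2 * t))) :=
    sin_pos_of_pos_of_lt_pi hθ (by linarith [pi_pos])
  exact mul_two_tan_div_sin_sub_tan_nonneg hθ hθπ
    (sin_le_two_mul_of_one_sub_cos_div_sin_le hsin hy1)

/-- The circles `C_{θ⁺(t)}` with `θ⁺(t) = arcsin(e^{2t})` form a supersolution barrier: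
at any point of height `y` on the arc, the inward normal speed `y·(θ⁺)'(t)/sin θ⁺`
is at least the curvature `tan θ⁺`. -/
theorem upper_circle_barrier {t y : ℝ} (ht : t < 0)
    (hy1 : (1 - Real.cos (Real.arcsin (Real.exp (2 * t)))) / Real.sin (Real.arcsin (Real.exp (2 * t))) ≤ y)
    (hy2 : y ≤ Real.sin (Real.arcsin (Real.exp (2 * t)))) :
    y * deriv (fun s : ℝ => Real.arcsin (Real.exp (2 * s))) t
        / Real.sin (Real.arcsin (Real.exp (2 * t)))
      - Real.tan (Real.arcsin (Real.exp (2 * t))) ≥ 0 :=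
  upper_circle_barrier_general ht hy1
end

section
/- Let B > 0 and let x, y : [0, M] → ℝ be continuously differentiable with y' = −x² on [0, M] and y(0) = y(M) = 0. Then x ≡ 0 on [0, M]. In particular, if additionally x' = B + x·y, then B = 0, a contradiction; hence no such pair exists with B > 0 and M > 0. -/
/-- If `y' = −x²` on `[0, M]` with `y(0) = y(M) = 0` and `x` continuous, then `x ≡ 0`
on `[0, M]`; in particular the rotator equation `x' = B + xy` with `B > 0` is then
impossible. -/
theorem no_rotator_pair {B M : ℝ} (hB : 0 < B) (hM : 0 < M) (x y : ℝ → ℝ)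
    (hxc : ContinuousOn x (Set.Icc 0 M))
    (hy : ∀ s ∈ Set.Icc (0 : ℝ) M, HasDerivAt y (-(x s) ^ 2) s)
    (hy0 : y 0 = 0) (hyM : y M = 0) :
    (∀ s ∈ Set.Icc (0 : ℝ) M, x s = 0) ∧
      ((∀ s ∈ Set.Icc (0 : ℝ) M, HasDerivAt x (B + x s * y s) s) → False) := by
  -- y is antitone on [0,M]
  have hyc : ContinuousOn y (Set.Icc 0 M) := fun s hs =>
    (hy s hs).continuousAt.continuousWithinAt
  have hanti : AntitoneOn y (Set.Icc 0 M) := by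
    apply antitoneOn_of_deriv_nonpos (convex_Icc 0 M) hyc
    · intro s hs
      rw [interior_Icc] at hs
      exact (hy s (Set.Ioo_subset_Icc_self hs)).differentiableAt.differentiableWithinAt
    · intro s hs
      rw [interior_Icc] at hs
      rw [(hy s (Set.Ioo_subset_Icc_self hs)).deriv]
      exact neg_nonpos.mpr (sq_nonneg _)
  have hy_zero : ∀ s ∈ Set.Icc (0 : ℝ) M, y s = 0 := by
    intro s hs
    have h1 := hanti (Set.left_mem_Icc.mpr hM.le) hs hs.1
    have h2 := hanti hs (Set.right_mem_Icc.mpr hM.le) hs.2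
    rw [hy0] at h1; rw [hyM] at h2
    linarith
  have hx_zero : ∀ s ∈ Set.Icc (0 : ℝ) M, x s = 0 := by
    intro s hs
    have h1 : HasDerivWithinAt y (-(x s) ^ 2) (Set.Icc 0 M) s :=
      (hy s hs).hasDerivWithinAt
    have h2 : HasDerivWithinAt y 0 (Set.Icc 0 M) s := by
      have : HasDerivWithinAt (fun _ : ℝ => (0 : ℝ)) 0 (Set.Icc 0 M) s :=
        (hasDerivWithinAt_const _ _ 0)
      exact this.congr (fun t ht => (hy_zero t ht).symm ▸ rfl) (hy_zero s hs)
    have hud : UniqueDiffWithinAt ℝ (Set.Icc (0 : ℝ) M) s :=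
      (uniqueDiffOn_Icc hM) s hs
    have heq : -(x s) ^ 2 = 0 := by
      calc -(x s) ^ 2 = derivWithin y (Set.Icc 0 M) s := (h1.derivWithin hud).symm
        _ = 0 := h2.derivWithin hud
    nlinarith [sq_nonneg (x s)]
  refine ⟨hx_zero, fun hx => ?_⟩
  have hs2 : M / 2 ∈ Set.Ioo (0 : ℝ) M := ⟨by linarith, by linarith⟩
  have hs2' : M / 2 ∈ Set.Icc (0 : ℝ) M := Set.Ioo_subset_Icc_self hs2
  have hd := hx (M / 2) hs2'
  rw [hx_zero _ hs2', hy_zero _ hs2'] at hd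
  have hnb : Set.Icc (0 : ℝ) M ∈ nhds (M / 2) := Icc_mem_nhds hs2.1 hs2.2
  have h0 : HasDerivAt x 0 (M / 2) := by
    have hc : HasDerivAt (fun _ : ℝ => (0 : ℝ)) 0 (M / 2) := hasDerivAt_const _ 0
    exact hc.congr_of_eventuallyEq
      (Filter.eventuallyEq_of_mem hnb (fun t ht => (hx_zero t ht)))
  have : B + 0 * 0 = 0 := hd.unique h0
  linarith
end
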